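/- arXiv:1511.06028 — 11 statements merged into one kernel-verified Lean document; each statement's English description precedes it below -/
import Mathlib

section
/- Let F and G be convex subsets of a vector space with nonempty intersection, K a linear map into a Hilbert space, and L a linear functional. Define the ordered modulus of continuity ω(δ) = sup{Lg − Lf : ‖K(g−f)‖ ≤ δ, f ∈ F, g ∈ G}. Then ω is concave on (0, ∞). -/
/-!
Convex combinations of admissible pairs `(f₁, g₁)` at radius `δ₁` and `(f₂, g₂)` at radius `δ₂`
are admissible at radius `t δ₁ + (1 - t) δ₂`, by convexity of `F`, `G` and the triangle
inequality, while `L g - L f` combines linearly. Hence the value set at the combined radius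
contains the Minkowski combination `t • S(δ₁) + (1 - t) • S(δ₂)`, whose supremum is
`t ω(δ₁) + (1 - t) ω(δ₂)`.
-/

def orderedModulusSet {V Y : Type*} [AddCommGroup V] [Module ℝ V]
    [NormedAddCommGroup Y] [InnerProductSpace ℝ Y]
    (K : V →ₗ[ℝ] Y) (L : V →ₗ[ℝ] ℝ) (F G : Set V) (δ : ℝ) : Set ℝ :=
  {r | ∃ f ∈ F, ∃ g ∈ G, ‖K (g - f)‖ ≤ δ ∧ r = L g - L f}

noncomputable def orderedModulus {V Y : Type*} [AddCommGroup V] [Module ℝ V]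
    [NormedAddCommGroup Y] [InnerProductSpace ℝ Y]
    (K : V →ₗ[ℝ] Y) (L : V →ₗ[ℝ] ℝ) (F G : Set V) (δ : ℝ) : ℝ :=
  sSup (orderedModulusSet K L F G δ)

open scoped Pointwise

theorem Real.sSup_smul_add_smul {A B : Set ℝ} (hA : A.Nonempty) (hA' : BddAbove A)
    (hB : B.Nonempty) (hB' : BddAbove B) {a b : ℝ} (ha : 0 ≤ a) (hb : 0 ≤ b) :
    sSup (a • A + b • B) = a * sSup A + b * sSup B := by
  rw [csSup_add hA.smul_set (hA'.smul_of_nonneg ha) hB.smul_set (hB'.smul_of_nonneg hb),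
    Real.sSup_smul_of_nonneg ha, Real.sSup_smul_of_nonneg hb, smul_eq_mul, smul_eq_mul]

section OrderedModulus

variable {V Y : Type*} [AddCommGroup V] [Module ℝ V] [NormedAddCommGroup Y]
  [InnerProductSpace ℝ Y] (K : V →ₗ[ℝ] Y) (L : V →ₗ[ℝ] ℝ) {F G : Set V}

theorem orderedModulusSet_nonempty (hFG : (F ∩ G).Nonempty) {δ : ℝ} (hδ : 0 ≤ δ) :
    (orderedModulusSet K L F G δ).Nonempty := by
  obtain ⟨x, hxF, hxG⟩ := hFG
  exact ⟨0, x, hxF, x, hxG, by simpa using hδ, by simp⟩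

theorem smul_add_smul_orderedModulusSet_subset (hF : Convex ℝ F) (hG : Convex ℝ G)
    {a b : ℝ} (ha : 0 ≤ a) (hb : 0 ≤ b) (hab : a + b = 1) (δ₁ δ₂ : ℝ) :
    a • orderedModulusSet K L F G δ₁ + b • orderedModulusSet K L F G δ₂ ⊆
      orderedModulusSet K L F G (a * δ₁ + b * δ₂) := by
  rintro _ ⟨_, ⟨r₁, ⟨f₁, hf₁, g₁, hg₁, hδ₁, rfl⟩, rfl⟩, _, ⟨r₂, ⟨f₂, hf₂, g₂, hg₂, hδ₂, rfl⟩, rfl⟩,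
    rfl⟩
  refine ⟨a • f₁ + b • f₂, hF hf₁ hf₂ ha hb hab, a • g₁ + b • g₂, hG hg₁ hg₂ ha hb hab, ?_, ?_⟩
  · have hdiff : (a • g₁ + b • g₂) - (a • f₁ + b • f₂) = a • (g₁ - f₁) + b • (g₂ - f₂) := by
      simp only [smul_sub]; abel
    calc ‖K ((a • g₁ + b • g₂) - (a • f₁ + b • f₂))‖
        ≤ ‖a • K (g₁ - f₁)‖ + ‖b • K (g₂ - f₂)‖ := by
          rw [hdiff, map_add, map_smul, map_smul]; exact norm_add_le _ _
      _ = a * ‖K (g₁ - f₁)‖ + b * ‖K (g₂ - f₂)‖ := by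
          rw [norm_smul, norm_smul, Real.norm_of_nonneg ha, Real.norm_of_nonneg hb]
      _ ≤ a * δ₁ + b * δ₂ := by gcongr
  · simp only [map_add, map_smul, smul_eq_mul]
    ring

end OrderedModulus

/-- Concavity of the ordered modulus of continuity. -/
theorem orderedModulus_concave {V Y : Type*} [AddCommGroup V] [Module ℝ V]
    [NormedAddCommGroup Y] [InnerProductSpace ℝ Y]
    (K : V →ₗ[ℝ] Y) (L : V →ₗ[ℝ] ℝ) (F G : Set V)
    (hF : Convex ℝ F) (hG : Convex ℝ G) (hFG : (F ∩ G).Nonempty)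
    (hbdd : ∀ δ > 0, BddAbove (orderedModulusSet K L F G δ))
    (δ₁ δ₂ t : ℝ) (hδ₁ : 0 < δ₁) (hδ₂ : 0 < δ₂) (ht0 : 0 ≤ t) (ht1 : t ≤ 1) :
    t * orderedModulus K L F G δ₁ + (1 - t) * orderedModulus K L F G δ₂ ≤
      orderedModulus K L F G (t * δ₁ + (1 - t) * δ₂) := by
  have hs : 0 ≤ 1 - t := sub_nonneg.mpr ht1
  have hδ : 0 < t * δ₁ + (1 - t) * δ₂ := by
    rcases ht0.eq_or_lt with rfl | ht
    · simpa using hδ₂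
    · positivity
  have hne₁ := orderedModulusSet_nonempty K L hFG hδ₁.le
  have hne₂ := orderedModulusSet_nonempty K L hFG hδ₂.le
  calc t * orderedModulus K L F G δ₁ + (1 - t) * orderedModulus K L F G δ₂
      = sSup (t • orderedModulusSet K L F G δ₁ + (1 - t) • orderedModulusSet K L F G δ₂) :=
        (Real.sSup_smul_add_smul hne₁ (hbdd δ₁ hδ₁) hne₂ (hbdd δ₂ hδ₂) ht0 hs).symm
    _ ≤ orderedModulus K L F G (t * δ₁ + (1 - t) * δ₂) :=
        csSup_le_csSup (hbdd _ hδ) (hne₁.smul_set.add hne₂.smul_set)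
          (smul_add_smul_orderedModulusSet_subset K L hF hG ht0 hs (by ring) δ₁ δ₂)
end

section
/- Suppose F is centrosymmetric (f ∈ F implies −f ∈ F) and convex, and 0 ∈ F. Then the single-class modulus satisfies ω(δ; F) = sup{2 L f : f ∈ F, ‖K f‖ ≤ δ/2}. -/
theorem Convex.half_smul_sub_mem {V : Type*} [AddCommGroup V] [Module ℝ V] {F : Set V}
    (hF : Convex ℝ F) (hsym : ∀ f ∈ F, -f ∈ F) {f g : V} (hf : f ∈ F) (hg : g ∈ F) :
    (1 / 2 : ℝ) • (g - f) ∈ F := by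
  have hmid := hF hg (hsym f hf) (by norm_num : (0 : ℝ) ≤ 1 / 2) (by norm_num : (0 : ℝ) ≤ 1 / 2)
    (by norm_num)
  rwa [← smul_add, ← sub_eq_add_neg] at hmid

theorem orderedModulusSet_self_eq_of_convex_of_neg_mem {V Y : Type*} [AddCommGroup V]
    [Module ℝ V] [NormedAddCommGroup Y] [InnerProductSpace ℝ Y]
    (K : V →ₗ[ℝ] Y) (L : V →ₗ[ℝ] ℝ) {F : Set V}
    (hF : Convex ℝ F) (hsym : ∀ f ∈ F, -f ∈ F) (δ : ℝ) :
    orderedModulusSet K L F F δ = {r | ∃ f ∈ F, ‖K f‖ ≤ δ / 2 ∧ r = 2 * L f} := by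
  ext r
  constructor
  · rintro ⟨f, hf, g, hg, hK, rfl⟩
    refine ⟨(1 / 2 : ℝ) • (g - f), hF.half_smul_sub_mem hsym hf hg, ?_, ?_⟩
    · rw [map_smul, norm_smul, Real.norm_of_nonneg (by norm_num)]
      linarith
    · simp only [map_smul, map_sub, smul_eq_mul]
      ring
  · rintro ⟨f, hf, hK, rfl⟩
    refine ⟨-f, hsym f hf, f, hf, ?_, ?_⟩
    · rw [sub_neg_eq_add, ← two_smul ℝ, map_smul, norm_smul, Real.norm_two]
      linarith
    · rw [map_neg]
      ring

theorem centrosymmetric_modulus_general {V Y : Type*} [AddCommGroup V] [Module ℝ V]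
    [NormedAddCommGroup Y] [InnerProductSpace ℝ Y]
    (K : V →ₗ[ℝ] Y) (L : V →ₗ[ℝ] ℝ) (F : Set V)
    (hF : Convex ℝ F) (hsym : ∀ f ∈ F, -f ∈ F)
    (δ : ℝ) :
    orderedModulus K L F F δ =
      sSup {r | ∃ f ∈ F, ‖K f‖ ≤ δ / 2 ∧ r = 2 * L f} :=
  congrArg sSup (orderedModulusSet_self_eq_of_convex_of_neg_mem K L hF hsym δ)

/-- For a centrosymmetric convex class, the single-class modulus equals
sup of 2Lf over f ∈ F with ‖Kf‖ ≤ δ/2. -/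
theorem centrosymmetric_modulus {V Y : Type*} [AddCommGroup V] [Module ℝ V]
    [NormedAddCommGroup Y] [InnerProductSpace ℝ Y]
    (K : V →ₗ[ℝ] Y) (L : V →ₗ[ℝ] ℝ) (F : Set V)
    (hF : Convex ℝ F) (hsym : ∀ f ∈ F, -f ∈ F) (h0 : (0 : V) ∈ F)
    (δ : ℝ) (hδ : 0 < δ) :
    orderedModulus K L F F δ =
      sSup {r | ∃ f ∈ F, ‖K f‖ ≤ δ / 2 ∧ r = 2 * L f} :=
  centrosymmetric_modulus_general K L F hF hsym δ
end

section
/- Suppose F is convex and centrosymmetric, g ∈ F, and f − g ∈ F for all f ∈ F. Then the ordered modulus between F and the singleton {g} satisfies ω(δ; F, {g}) = ω(δ; {g}, F) = (1/2)·ω(2δ; F). -/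
/-!
Every value `L b - L a` of the modulus problem is determined by the difference `h = b - a`.
Against the singleton `{g}` the differences `g - f` and `f - g` sweep out exactly `F`, since
`f ↦ g - f` and `f ↦ f - g` map `F` onto itself; so both ordered moduli equal the sup of
`L h` over `h ∈ F` with `‖K h‖ ≤ δ`. For `F` against itself, convexity and central symmetry
make `(b - a) / 2 = (b + (-a)) / 2` an element of `F`, while conversely `h - (-h) = 2 h`;
hence the differences of constraint `2δ` are exactly twice the elements of constraint `δ`.
-/

section OrderedModulus

open Pointwise

variable {V Y : Type*} [AddCommGroup V] [Module ℝ V] [NormedAddCommGroup Y]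
  [InnerProductSpace ℝ Y] (K : V →ₗ[ℝ] Y) (L : V →ₗ[ℝ] ℝ) {F : Set V} {g : V} (δ : ℝ)

theorem orderedModulusSet_singleton_right (hrefl : ∀ f ∈ F, g - f ∈ F) :
    orderedModulusSet K L F {g} δ = L '' {h ∈ F | ‖K h‖ ≤ δ} := by
  ext r
  constructor
  · rintro ⟨f, hf, g, rfl, hK, rfl⟩
    exact ⟨g - f, ⟨hrefl f hf, hK⟩, map_sub L g f⟩
  · rintro ⟨h, ⟨hh, hK⟩, rfl⟩
    exact ⟨g - h, hrefl h hh, g, rfl, by rwa [sub_sub_cancel], by rw [← map_sub, sub_sub_cancel]⟩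

theorem orderedModulusSet_singleton_left (hsub : ∀ f ∈ F, f - g ∈ F)
    (hadd : ∀ f ∈ F, g + f ∈ F) :
    orderedModulusSet K L {g} F δ = L '' {h ∈ F | ‖K h‖ ≤ δ} := by
  ext r
  constructor
  · rintro ⟨g, rfl, f, hf, hK, rfl⟩
    exact ⟨f - g, ⟨hsub f hf, hK⟩, map_sub L f g⟩
  · rintro ⟨h, ⟨hh, hK⟩, rfl⟩
    exact ⟨g, rfl, g + h, hadd h hh, by rwa [add_sub_cancel_left],
      by rw [map_add, add_sub_cancel_left]⟩

theorem orderedModulusSet_self_eq_two_smul (hF : Convex ℝ F) (hsym : ∀ f ∈ F, -f ∈ F) :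
    orderedModulusSet K L F F (2 * δ) = (2 : ℝ) • L '' {h ∈ F | ‖K h‖ ≤ δ} := by
  ext r
  constructor
  · rintro ⟨a, ha, b, hb, hK, rfl⟩
    have hmid : (1 / 2 : ℝ) • (b - a) ∈ F := by
      simpa [smul_sub, sub_eq_add_neg] using
        hF hb (hsym a ha) (by norm_num : (0 : ℝ) ≤ 1 / 2) (by norm_num : (0 : ℝ) ≤ 1 / 2)
          (by norm_num)
    refine ⟨L ((1 / 2 : ℝ) • (b - a)), ⟨_, ⟨hmid, ?_⟩, rfl⟩, ?_⟩
    · rw [map_smul, norm_smul, Real.norm_of_nonneg (by norm_num)]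
      linarith
    · simp only [map_smul, map_sub, smul_eq_mul]
      ring
  · rintro ⟨_, ⟨h, ⟨hh, hK⟩, rfl⟩, rfl⟩
    have htwo : h - -h = (2 : ℝ) • h := by rw [two_smul, sub_neg_eq_add]
    refine ⟨-h, hsym h hh, h, hh, ?_, ?_⟩
    · rw [htwo, map_smul, norm_smul, Real.norm_two]
      linarith
    · rw [← map_sub, htwo, map_smul]

end OrderedModulus

theorem modulus_singleton_centrosymmetric_general {V Y : Type*} [AddCommGroup V] [Module ℝ V]
    [NormedAddCommGroup Y] [InnerProductSpace ℝ Y]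
    (K : V →ₗ[ℝ] Y) (L : V →ₗ[ℝ] ℝ) (F : Set V)
    (hF : Convex ℝ F) (hsym : ∀ f ∈ F, -f ∈ F)
    (g : V) (hshift : ∀ f ∈ F, f - g ∈ F)
    (δ : ℝ) :
    orderedModulus K L F {g} δ = (1 / 2) * orderedModulus K L F F (2 * δ) ∧
    orderedModulus K L ({g} : Set V) F δ = (1 / 2) * orderedModulus K L F F (2 * δ) := by
  have hrefl : ∀ f ∈ F, g - f ∈ F := fun f hf => by simpa using hsym _ (hshift f hf)
  have hadd : ∀ f ∈ F, g + f ∈ F := fun f hf => by simpa using hrefl _ (hsym f hf)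
  have hhalf : (1 / 2) * orderedModulus K L F F (2 * δ) = sSup (L '' {h ∈ F | ‖K h‖ ≤ δ}) := by
    rw [orderedModulus, orderedModulusSet_self_eq_two_smul K L δ hF hsym,
      Real.sSup_smul_of_nonneg zero_le_two, smul_eq_mul, ← mul_assoc]
    norm_num
  rw [hhalf, orderedModulus, orderedModulus, orderedModulusSet_singleton_right K L δ hrefl,
    orderedModulusSet_singleton_left K L δ hshift hadd]
  exact ⟨rfl, rfl⟩

/-- Ordered modulus between a centrosymmetric class F and a smooth singleton {g}
equals half the single-class modulus at 2δ. -/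
theorem modulus_singleton_centrosymmetric {V Y : Type*} [AddCommGroup V] [Module ℝ V]
    [NormedAddCommGroup Y] [InnerProductSpace ℝ Y]
    (K : V →ₗ[ℝ] Y) (L : V →ₗ[ℝ] ℝ) (F : Set V)
    (hF : Convex ℝ F) (hsym : ∀ f ∈ F, -f ∈ F)
    (g : V) (hg : g ∈ F) (hshift : ∀ f ∈ F, f - g ∈ F)
    (δ : ℝ) (hδ : 0 < δ) :
    orderedModulus K L F {g} δ = (1 / 2) * orderedModulus K L F F (2 * δ) ∧
    orderedModulus K L ({g} : Set V) F δ = (1 / 2) * orderedModulus K L F F (2 * δ) :=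
  modulus_singleton_centrosymmetric_general K L F hF hsym g hshift δ
end

section
/- Let F and G be convex, let f*, g* solve the ordered modulus problem at δ₀ with ‖K(f*−g*)‖ = δ₀ > 0, and let d be a supergradient of ω(·; F, G) at δ₀. Then for all g ∈ G: Lg − Lg* ≤ d·⟨K(g*−f*), K(g−g*)⟩/‖K(g*−f*)‖, and for all f ∈ F: Lf − Lf* ≥ d·⟨K(g*−f*), K(f−f*)⟩/‖K(g*−f*)‖. -/
/-! The supergradient inequality, combined with the definition of the modulus, says that
`L g - L f ≤ ω(δ₀) + d (‖K (g - f)‖ - δ₀)` for all `f ∈ F`, `g ∈ G`, with equality at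
`(f*, g*)`. Moving `g` from `g*` towards any `g ∈ G` (or `f` from `f*` towards any `f ∈ F`)
stays feasible by convexity, so the one-sided derivative at `t = 0` of the right-hand side
along the segment dominates that of the left-hand side. The derivative of
`t ↦ ‖a + t b‖` at `0` is `⟪a, b⟫ / ‖a‖`, which gives the bias inequalities. -/

open Filter Set Topology

theorem le_mul_of_hasDerivAt_of_eventually_mul_le {φ : ℝ → ℝ} {φ' x s d : ℝ}
    (hφ : HasDerivAt φ φ' x) (h : ∀ᶠ t in 𝓝[>] 0, t * s ≤ d * (φ (x + t) - φ x)) :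
    s ≤ d * φ' := by
  have hslope : Tendsto (fun t ↦ d * (t⁻¹ * (φ (x + t) - φ x))) (𝓝[>] 0) (𝓝 (d * φ')) :=
    hφ.tendsto_slope_zero_right.const_mul d
  refine ge_of_tendsto hslope ?_
  filter_upwards [h, self_mem_nhdsWithin] with t ht (htpos : 0 < t)
  rw [mul_left_comm, le_inv_mul_iff₀ htpos]
  exact ht

section InnerProductSpace

variable {Y : Type*} [NormedAddCommGroup Y] [InnerProductSpace ℝ Y]

theorem hasDerivAt_norm_add_smul {a : Y} (b : Y) (ha : a ≠ 0) :
    HasDerivAt (fun t : ℝ ↦ ‖a + t • b‖) (inner ℝ a b / ‖a‖) 0 := by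
  have hline : HasDerivAt (fun t : ℝ ↦ a + t • b) b 0 := by
    simpa using ((hasDerivAt_id (0 : ℝ)).smul_const b).const_add a
  have hsq := hline.norm_sq.sqrt (by simpa using ha)
  simp only [zero_smul, add_zero, Real.sqrt_sq (norm_nonneg _)] at hsq
  convert hsq using 1
  field_simp

theorem le_mul_inner_div_norm_of_forall_mul_le {a b : Y} {s d : ℝ} (ha : a ≠ 0)
    (h : ∀ t ∈ Ioc (0 : ℝ) 1, 0 < ‖a + t • b‖ → t * s ≤ d * (‖a + t • b‖ - ‖a‖)) :
    s ≤ d * inner ℝ a b / ‖a‖ := by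
  have hderiv := hasDerivAt_norm_add_smul b ha
  have hpos : ∀ᶠ t in 𝓝 (0 : ℝ), 0 < ‖a + t • b‖ :=
    continuousAt_const.eventually_lt hderiv.continuousAt (by simpa using ha)
  rw [mul_div_assoc]
  refine le_mul_of_hasDerivAt_of_eventually_mul_le hderiv ?_
  filter_upwards [Ioc_mem_nhdsGT one_pos, nhdsWithin_le_nhds hpos] with t ht htpos
  simpa using h t ht (by simpa using htpos)

end InnerProductSpace

theorem norm_map_sub_comm {𝓕 V Y : Type*} [AddGroup V] [SeminormedAddGroup Y] [FunLike 𝓕 V Y]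
    [AddMonoidHomClass 𝓕 V Y] (K : 𝓕) (x y : V) : ‖K (x - y)‖ = ‖K (y - x)‖ := by
  rw [← neg_sub, map_neg, norm_neg]

section BiasInequalities

variable {V Y : Type*} [AddCommGroup V] [Module ℝ V] [NormedAddCommGroup Y]
  [InnerProductSpace ℝ Y] {K : V →ₗ[ℝ] Y} {L : V →ₗ[ℝ] ℝ} {F G : Set V}

theorem sub_le_orderedModulus {f g : V} {δ : ℝ} (hbdd : BddAbove (orderedModulusSet K L F G δ))
    (hf : f ∈ F) (hg : g ∈ G) (hδ : ‖K (g - f)‖ ≤ δ) : L g - L f ≤ orderedModulus K L F G δ :=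
  le_csSup hbdd ⟨f, hf, g, hg, hδ, rfl⟩

variable {fStar gStar : V} {d : ℝ}

theorem sub_le_of_forall_sub_le_tangent (hG : Convex ℝ G) (hfF : fStar ∈ F) (hgG : gStar ∈ G)
    (hne : K (gStar - fStar) ≠ 0)
    (htangent : ∀ f ∈ F, ∀ g ∈ G, 0 < ‖K (g - f)‖ →
      L g - L f ≤ L gStar - L fStar + d * (‖K (g - f)‖ - ‖K (gStar - fStar)‖))
    {g : V} (hg : g ∈ G) :
    L g - L gStar ≤ d * inner ℝ (K (gStar - fStar)) (K (g - gStar)) / ‖K (gStar - fStar)‖ := by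
  refine le_mul_inner_div_norm_of_forall_mul_le hne fun t ht hpos ↦ ?_
  have hK : K (gStar + t • (g - gStar) - fStar) = K (gStar - fStar) + t • K (g - gStar) := by
    rw [add_sub_right_comm, map_add, map_smul]
  have hL : L (gStar + t • (g - gStar)) = L gStar + t * (L g - L gStar) := by
    rw [map_add, map_smul, map_sub, smul_eq_mul]
  have hsegment := htangent fStar hfF _ (hG.add_smul_sub_mem hgG hg (Ioc_subset_Icc_self ht))
    (hK ▸ hpos)
  rw [hK, hL] at hsegment
  linarith

theorem le_sub_of_forall_sub_le_tangent (hF : Convex ℝ F) (hfF : fStar ∈ F) (hgG : gStar ∈ G)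
    (hne : K (gStar - fStar) ≠ 0)
    (htangent : ∀ f ∈ F, ∀ g ∈ G, 0 < ‖K (g - f)‖ →
      L g - L f ≤ L gStar - L fStar + d * (‖K (g - f)‖ - ‖K (gStar - fStar)‖))
    {f : V} (hf : f ∈ F) :
    d * inner ℝ (K (gStar - fStar)) (K (f - fStar)) / ‖K (gStar - fStar)‖ ≤ L f - L fStar := by
  -- `(G, F, g*, f*, -L)` is again a tangent configuration, so the first bias inequality applies.
  have hswap := sub_le_of_forall_sub_le_tangent (K := K) (L := -L) (d := d) hF hgG hfF
    (by rwa [← neg_sub, map_neg, neg_ne_zero])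
    (fun g hg f hf hpos ↦ by
      rw [norm_map_sub_comm K] at hpos ⊢
      rw [norm_map_sub_comm K fStar]
      simp only [LinearMap.neg_apply]
      linarith [htangent f hf g hg hpos]) hf
  rw [← neg_sub gStar fStar, map_neg, inner_neg_left, norm_neg] at hswap
  simp only [LinearMap.neg_apply, mul_neg, neg_div] at hswap
  linarith

end BiasInequalities

theorem ordered_modulus_bias_inequalities_general {V Y : Type*} [AddCommGroup V] [Module ℝ V]
    [NormedAddCommGroup Y] [InnerProductSpace ℝ Y]
    (K : V →ₗ[ℝ] Y) (L : V →ₗ[ℝ] ℝ) (F G : Set V)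
    (hF : Convex ℝ F) (hG : Convex ℝ G)
    (hbdd : ∀ δ > 0, BddAbove (orderedModulusSet K L F G δ))
    (δ₀ : ℝ) (hδ₀ : 0 < δ₀) (fStar gStar : V)
    (hfF : fStar ∈ F) (hgG : gStar ∈ G)
    (hnorm : ‖K (gStar - fStar)‖ = δ₀)
    (hattain : L gStar - L fStar = orderedModulus K L F G δ₀)
    (d : ℝ)
    (hd : ∀ η > 0, orderedModulus K L F G η ≤ orderedModulus K L F G δ₀ + d * (η - δ₀)) :
    (∀ g ∈ G, L g - L gStar ≤
        d * (inner ℝ (K (gStar - fStar)) (K (g - gStar)) : ℝ) / ‖K (gStar - fStar)‖) ∧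
    (∀ f ∈ F, d * (inner ℝ (K (gStar - fStar)) (K (f - fStar)) : ℝ) / ‖K (gStar - fStar)‖ ≤
        L f - L fStar) := by
  have hne : K (gStar - fStar) ≠ 0 := norm_ne_zero_iff.mp (hnorm ▸ hδ₀.ne')
  have htangent : ∀ f ∈ F, ∀ g ∈ G, 0 < ‖K (g - f)‖ →
      L g - L f ≤ L gStar - L fStar + d * (‖K (g - f)‖ - ‖K (gStar - fStar)‖) := by
    intro f hf g hg hpos
    have hle := sub_le_orderedModulus (hbdd _ hpos) hf hg le_rfl
    have hsuper := hd _ hpos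
    rw [hnorm, hattain]
    linarith
  exact ⟨fun g hg ↦ sub_le_of_forall_sub_le_tangent hG hfF hgG hne htangent hg,
    fun f hf ↦ le_sub_of_forall_sub_le_tangent hF hfF hgG hne htangent hf⟩

/-- Bias inequalities for the solutions of the ordered modulus problem. -/
theorem ordered_modulus_bias_inequalities {V Y : Type*} [AddCommGroup V] [Module ℝ V]
    [NormedAddCommGroup Y] [InnerProductSpace ℝ Y]
    (K : V →ₗ[ℝ] Y) (L : V →ₗ[ℝ] ℝ) (F G : Set V)
    (hF : Convex ℝ F) (hG : Convex ℝ G) (hFG : (F ∩ G).Nonempty)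
    (hbdd : ∀ δ > 0, BddAbove (orderedModulusSet K L F G δ))
    (δ₀ : ℝ) (hδ₀ : 0 < δ₀) (fStar gStar : V)
    (hfF : fStar ∈ F) (hgG : gStar ∈ G)
    (hnorm : ‖K (gStar - fStar)‖ = δ₀)
    (hattain : L gStar - L fStar = orderedModulus K L F G δ₀)
    (d : ℝ)
    (hd : ∀ η > 0, orderedModulus K L F G η ≤ orderedModulus K L F G δ₀ + d * (η - δ₀)) :
    (∀ g ∈ G, L g - L gStar ≤
        d * (inner ℝ (K (gStar - fStar)) (K (g - gStar)) : ℝ) / ‖K (gStar - fStar)‖) ∧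
    (∀ f ∈ F, d * (inner ℝ (K (gStar - fStar)) (K (f - fStar)) : ℝ) / ‖K (gStar - fStar)‖ ≤
        L f - L fStar) :=
  ordered_modulus_bias_inequalities_general K L F G hF hG hbdd δ₀ hδ₀ fStar gStar hfF hgG hnorm
    hattain d hd
end

section
/- Under the conditions of the bias inequality lemma (f*, g* attain the ordered modulus at δ with ‖K(g*−f*)‖ = δ, d a supergradient), the affine estimator L̂ = L((f*+g*)/2) + (d/δ)⟨K(g*−f*), Y − K(f*+g*)/2⟩ applied to Y = Kf has maximum bias over F attained at f* and minimum bias over G attained at g*; moreover the maximum bias over F equals (ω(δ) − δd)/2 and the minimum bias over G equals −(ω(δ) − δd)/2. -/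
/-! The supergradient inequality for `ω = orderedModulus K L F G`, together with `ω` being a
supremum, says that `(f*, g*)` maximizes the penalized gap `L g - L f - d ‖K (g - f)‖` over
`F × G`. Moving `f*` or `g*` along a segment inside the convex set `F` or `G`, Fermat's rule at
the endpoint `0` of `[0, 1]` (the norm is differentiable at `K (g* - f*) ≠ 0`, with derivative
`⟪K (g* - f*), ·⟫ / δ`) gives exactly the first-order inequalities saying that `f*` maximizes
and `g*` minimizes the bias. The two extreme values are then a direct computation. -/

open Set Filter Topology RealInnerProductSpace

lemma HasDerivAt.nonpos_of_isMaxOn_Icc {h : ℝ → ℝ} {h' : ℝ} (hmax : IsMaxOn h (Icc 0 1) 0)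
    (hd : HasDerivAt h h' 0) : h' ≤ 0 := by
  have hcone : (1 : ℝ) ∈ posTangentConeAt (Icc (0 : ℝ) 1) 0 :=
    mem_posTangentConeAt_of_segment_subset (by simp [segment_eq_Icc])
  simpa using hmax.localize.hasFDerivWithinAt_nonpos hd.hasFDerivAt.hasFDerivWithinAt hcone

section InnerProductSpace

variable {Y : Type*} [NormedAddCommGroup Y] [InnerProductSpace ℝ Y]

lemma hasDerivAt_norm_add_smul_s8 {u : Y} (hu : u ≠ 0) (w : Y) :
    HasDerivAt (fun t : ℝ => ‖u + t • w‖) (⟪u, w⟫ / ‖u‖) 0 := by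
  have hline : HasDerivAt (fun t : ℝ => u + t • w) w 0 := by
    simpa using ((hasDerivAt_id (0 : ℝ)).smul_const w).const_add u
  convert hline.norm_sq.sqrt (by simpa using hu) using 1
  · ext t; simp [Real.sqrt_sq (norm_nonneg _)]
  · simp [Real.sqrt_sq (norm_nonneg _)]; field_simp

lemma le_mul_inner_div_norm_of_isMaxOn {u : Y} (hu : u ≠ 0) {w : Y} {a d : ℝ}
    (hmax : IsMaxOn (fun t : ℝ => t * a - d * ‖u + t • w‖) (Icc 0 1) 0) :
    a ≤ d / ‖u‖ * ⟪u, w⟫ := by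
  have hderiv : HasDerivAt (fun t : ℝ => t * a - d * ‖u + t • w‖) (a - d * (⟪u, w⟫ / ‖u‖)) 0 := by
    simpa using ((hasDerivAt_id' (0 : ℝ)).mul_const a).fun_sub
      ((hasDerivAt_norm_add_smul_s8 hu w).const_mul d)
  rw [div_mul_eq_mul_div, mul_div_assoc]
  linarith [hderiv.nonpos_of_isMaxOn_Icc hmax]

end InnerProductSpace

section OrderedModulus

variable {V Y : Type*} [AddCommGroup V] [Module ℝ V] [NormedAddCommGroup Y] [InnerProductSpace ℝ Y]
  (K : V →ₗ[ℝ] Y) (L : V →ₗ[ℝ] ℝ) (d : ℝ)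

def penalizedGap (f g : V) : ℝ := L g - L f - d * ‖K (g - f)‖

noncomputable def affineBias (δ : ℝ) (f₀ g₀ f : V) : ℝ :=
  L ((1 / 2 : ℝ) • (f₀ + g₀)) + d / δ * ⟪K (g₀ - f₀), K f - K ((1 / 2 : ℝ) • (f₀ + g₀))⟫ - L f

variable {K L d} {F G : Set V}

lemma penalizedGap_le_of_supergradient {δ : ℝ}
    (hbdd : ∀ δ > 0, BddAbove (orderedModulusSet K L F G δ))
    (hd : ∀ η > 0, orderedModulus K L F G η ≤ orderedModulus K L F G δ + d * (η - δ))
    {f g : V} (hf : f ∈ F) (hg : g ∈ G) :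
    penalizedGap K L d f g ≤ orderedModulus K L F G δ - δ * d := by
  have hε : ∀ ε > 0, penalizedGap K L d f g ≤ orderedModulus K L F G δ - δ * d + d * ε := by
    intro ε hε
    set η := ‖K (g - f)‖ + ε
    have hη : 0 < η := by positivity
    have hmem : L g - L f ∈ orderedModulusSet K L F G η :=
      ⟨f, hf, g, hg, le_add_of_nonneg_right hε.le, rfl⟩
    have := (le_csSup (hbdd η hη) hmem).trans (hd η hη)
    simp only [penalizedGap]
    linarith
  have hlim : Tendsto (fun ε => orderedModulus K L F G δ - δ * d + d * ε) (𝓝[>] 0)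
      (𝓝 (orderedModulus K L F G δ - δ * d)) := by
    refine (Continuous.tendsto' ?_ 0 _ (by simp)).mono_left nhdsWithin_le_nhds
    fun_prop
  exact ge_of_tendsto hlim (eventually_nhdsWithin_of_forall hε)

lemma le_inner_of_penalizedGap_le (hF : Convex ℝ F) (hG : Convex ℝ G) {f₀ g₀ : V}
    (hf₀ : f₀ ∈ F) (hg₀ : g₀ ∈ G)
    (hmax : ∀ f ∈ F, ∀ g ∈ G, penalizedGap K L d f g ≤ penalizedGap K L d f₀ g₀)
    (hu : K (g₀ - f₀) ≠ 0) {f g : V} (hf : f ∈ F) (hg : g ∈ G) :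
    L (g - g₀) - L (f - f₀) ≤
      d / ‖K (g₀ - f₀)‖ * ⟪K (g₀ - f₀), K ((g - g₀) - (f - f₀))⟫ := by
  refine le_mul_inner_div_norm_of_isMaxOn hu fun t ht => ?_
  have := hmax _ (hF.add_smul_sub_mem hf₀ hf ht) _ (hG.add_smul_sub_mem hg₀ hg ht)
  have hK : K (g₀ + t • (g - g₀) - (f₀ + t • (f - f₀))) =
      K (g₀ - f₀) + t • K (g - g₀ - (f - f₀)) := by
    rw [← map_smul, ← map_add]; congr 1; module
  simp only [penalizedGap, map_add, map_smul, smul_eq_mul, hK] at this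
  simp only [mem_ofPred_eq, zero_smul, add_zero, zero_mul, zero_sub]
  linarith [mul_sub t (L (g - g₀)) (L (f - f₀))]

lemma affineBias_sub_affineBias (δ : ℝ) (f₀ g₀ f f' : V) :
    affineBias K L d δ f₀ g₀ f - affineBias K L d δ f₀ g₀ f' =
      d / δ * ⟪K (g₀ - f₀), K (f - f')⟫ - L (f - f') := by
  have hinner := inner_sub_right (𝕜 := ℝ) (K (g₀ - f₀))
    (K f - K ((1 / 2 : ℝ) • (f₀ + g₀))) (K f' - K ((1 / 2 : ℝ) • (f₀ + g₀)))
  rw [sub_sub_sub_cancel_right, ← map_sub] at hinner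
  rw [affineBias, affineBias, hinner, map_sub L]
  ring

lemma affineBias_left {δ : ℝ} {f₀ g₀ : V} (hnorm : ‖K (g₀ - f₀)‖ = δ) :
    affineBias K L d δ f₀ g₀ f₀ = (L g₀ - L f₀ - δ * d) / 2 := by
  have hK : K f₀ - K ((1 / 2 : ℝ) • (f₀ + g₀)) = (-(1 / 2) : ℝ) • K (g₀ - f₀) := by
    simp only [map_smul, map_add, map_sub]
    module
  rw [affineBias, hK, real_inner_smul_right, real_inner_self_eq_norm_sq, hnorm]
  simp only [map_smul, map_add, smul_eq_mul]
  field_simp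
  ring

lemma affineBias_right {δ : ℝ} {f₀ g₀ : V} (hnorm : ‖K (g₀ - f₀)‖ = δ) :
    affineBias K L d δ f₀ g₀ g₀ = -((L g₀ - L f₀ - δ * d) / 2) := by
  have hK : K g₀ - K ((1 / 2 : ℝ) • (f₀ + g₀)) = (1 / 2 : ℝ) • K (g₀ - f₀) := by
    simp only [map_smul, map_add, map_sub]
    module
  rw [affineBias, hK, real_inner_smul_right, real_inner_self_eq_norm_sq, hnorm]
  simp only [map_smul, map_add, smul_eq_mul]
  field_simp
  ring

end OrderedModulus

theorem affine_estimator_bias_general {V Y : Type*} [AddCommGroup V] [Module ℝ V]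
    [NormedAddCommGroup Y] [InnerProductSpace ℝ Y]
    (K : V →ₗ[ℝ] Y) (L : V →ₗ[ℝ] ℝ) (F G : Set V)
    (hF : Convex ℝ F) (hG : Convex ℝ G)
    (hbdd : ∀ δ > 0, BddAbove (orderedModulusSet K L F G δ))
    (δ : ℝ) (hδ : 0 < δ) (fStar gStar : V)
    (hfF : fStar ∈ F) (hgG : gStar ∈ G)
    (hnorm : ‖K (gStar - fStar)‖ = δ)
    (hattain : L gStar - L fStar = orderedModulus K L F G δ)
    (d : ℝ)
    (hd : ∀ η > 0, orderedModulus K L F G η ≤ orderedModulus K L F G δ + d * (η - δ))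
    (bias : V → ℝ)
    (hbias : ∀ f, bias f = L (((1:ℝ)/2) • (fStar + gStar)) +
      (d / δ) * (inner ℝ (K (gStar - fStar))
        (K f - K (((1:ℝ)/2) • (fStar + gStar))) : ℝ) - L f) :
    (∀ f ∈ F, bias f ≤ bias fStar) ∧
    (∀ g ∈ G, bias gStar ≤ bias g) ∧
    bias fStar = (orderedModulus K L F G δ - δ * d) / 2 ∧
    bias gStar = -((orderedModulus K L F G δ - δ * d) / 2) := by
  obtain rfl : bias = affineBias K L d δ fStar gStar := funext hbias
  have hu : K (gStar - fStar) ≠ 0 := norm_ne_zero_iff.mp (hnorm ▸ hδ.ne')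
  have hstar : penalizedGap K L d fStar gStar = orderedModulus K L F G δ - δ * d := by
    rw [penalizedGap, hnorm, hattain, mul_comm]
  have hfirstOrder {f g : V} (hf : f ∈ F) (hg : g ∈ G) :=
    le_inner_of_penalizedGap_le hF hG hfF hgG
      (fun f hf g hg => hstar ▸ penalizedGap_le_of_supergradient hbdd hd hf hg) hu hf hg
  refine ⟨fun f hf => ?_, fun g hg => ?_, ?_, ?_⟩
  · have := hfirstOrder hf hgG
    simp only [sub_self, map_zero, zero_sub, map_neg, inner_neg_right, mul_neg, hnorm] at this
    rw [← sub_nonpos, affineBias_sub_affineBias]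
    linarith
  · have := hfirstOrder hfF hg
    simp only [sub_self, map_zero, sub_zero, hnorm] at this
    rw [← sub_nonneg, affineBias_sub_affineBias]
    linarith
  · rw [affineBias_left hnorm, hattain]
  · rw [affineBias_right hnorm, hattain]

/-- The affine estimator built from the modulus solutions has maximum bias over F
at f*, minimum bias over G at g*, and worst-case biases ±(ω(δ)−δd)/2. -/
theorem affine_estimator_bias {V Y : Type*} [AddCommGroup V] [Module ℝ V]
    [NormedAddCommGroup Y] [InnerProductSpace ℝ Y]
    (K : V →ₗ[ℝ] Y) (L : V →ₗ[ℝ] ℝ) (F G : Set V)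
    (hF : Convex ℝ F) (hG : Convex ℝ G) (hFG : (F ∩ G).Nonempty)
    (hbdd : ∀ δ > 0, BddAbove (orderedModulusSet K L F G δ))
    (δ : ℝ) (hδ : 0 < δ) (fStar gStar : V)
    (hfF : fStar ∈ F) (hgG : gStar ∈ G)
    (hnorm : ‖K (gStar - fStar)‖ = δ)
    (hattain : L gStar - L fStar = orderedModulus K L F G δ)
    (d : ℝ)
    (hd : ∀ η > 0, orderedModulus K L F G η ≤ orderedModulus K L F G δ + d * (η - δ))
    (bias : V → ℝ)
    (hbias : ∀ f, bias f = L (((1:ℝ)/2) • (fStar + gStar)) +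
      (d / δ) * (inner ℝ (K (gStar - fStar))
        (K f - K (((1:ℝ)/2) • (fStar + gStar))) : ℝ) - L f) :
    (∀ f ∈ F, bias f ≤ bias fStar) ∧
    (∀ g ∈ G, bias gStar ≤ bias g) ∧
    bias fStar = (orderedModulus K L F G δ - δ * d) / 2 ∧
    bias gStar = -((orderedModulus K L F G δ - δ * d) / 2) :=
  affine_estimator_bias_general K L F G hF hG hbdd δ hδ fStar gStar hfF hgG hnorm hattain d hd bias
    hbias
end

section
/- Consider a linear estimator L̂ = Σᵢ w₊(xᵢ)yᵢ − Σᵢ w₋(xᵢ)yᵢ in the regression model yᵢ = f(xᵢ) + uᵢ with E uᵢ = 0, where w₊(x) = 0 for x < 0, w₋(x) = 0 for x ≥ 0, Σᵢ w₊(xᵢ) = Σᵢ w₋(xᵢ) = 1, and Σᵢ xᵢʲ w₊(xᵢ) = Σᵢ xᵢʲ w₋(xᵢ) = 0 for j = 1,…,p−1. Then the maximum bias of L̂ for the RD parameter Lf = f₊(0) − f₋(0) over the class F_{RDT,p}(C) equals C·Σᵢ |w₊(xᵢ) + w₋(xᵢ)|·|xᵢ|^p. -/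
/-!
The weights reproduce polynomials of degree `< p` on each side of the cutoff, so the Taylor
polynomials contribute exactly `a 0 - b 0` to the estimator and the bias is the weighted sum of
the remainders, `∑ (w₊ r₊ - w₋ r₋)(xᵢ)`. Since `w₊` and `w₋` have disjoint supports, each term is
at most `|w₊ + w₋| C |xᵢ|^p`, with equality for the remainders `±C|t|^p` carrying the signs of
the weights.
-/

open Finset

section DisjointWeights

variable {a b B : ℝ}

theorem abs_mul_sign_le (hB : 0 ≤ B) (w : ℝ) : |B * (SignType.sign w : ℝ)| ≤ B := by
  rcases lt_trichotomy w 0 with hw | rfl | hw <;> simp [*, abs_of_nonneg hB]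

theorem mul_sub_mul_le_abs_add_mul (hab : a = 0 ∨ b = 0) {r s : ℝ} (hr : |r| ≤ B) (hs : |s| ≤ B) :
    a * r - b * s ≤ |a + b| * B := by
  have habs : |a + b| = |a| + |b| := by rcases hab with rfl | rfl <;> simp
  rw [habs, add_mul]
  have har : a * r ≤ |a| * B :=
    (le_abs_self _).trans (abs_mul a r ▸ mul_le_mul_of_nonneg_left hr (abs_nonneg a))
  have hbs : -(b * s) ≤ |b| * B :=
    (neg_le_abs _).trans (abs_mul b s ▸ mul_le_mul_of_nonneg_left hs (abs_nonneg b))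
  linarith

theorem mul_sub_mul_sign_eq_abs_add_mul (hab : a = 0 ∨ b = 0) :
    a * (B * SignType.sign a) - b * -(B * SignType.sign b) = |a + b| * B := by
  rcases hab with rfl | rfl <;> simp [mul_left_comm _ B, mul_comm _ B]

end DisjointWeights

theorem sum_mul_sum_range_eq_of_moments {ι : Type*} [Fintype ι] (x : ι → ℝ) (w : ℝ → ℝ)
    {p : ℕ} (hp : 1 ≤ p) (hw1 : ∑ i, w (x i) = 1)
    (hmom : ∀ j, 1 ≤ j → j ≤ p - 1 → ∑ i, x i ^ j * w (x i) = 0) (a : ℕ → ℝ) :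
    ∑ i, w (x i) * ∑ j ∈ range p, a j * x i ^ j = a 0 := by
  calc ∑ i, w (x i) * ∑ j ∈ range p, a j * x i ^ j
      = ∑ j ∈ range p, a j * ∑ i, x i ^ j * w (x i) := by
        simp_rw [mul_sum, sum_comm (s := univ)]
        exact sum_congr rfl fun j _ => sum_congr rfl fun i _ => by ring
    _ = a 0 * ∑ i, x i ^ 0 * w (x i) := by
        refine sum_eq_single_of_mem 0 (mem_range.2 hp) fun j hj hj0 => ?_
        rw [hmom j (Nat.one_le_iff_ne_zero.2 hj0) (by have := mem_range.1 hj; omega), mul_zero]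
    _ = a 0 := by simp [hw1]

theorem rd_bias_eq_sum_remainder {ι : Type*} [Fintype ι] (x : ι → ℝ) (wp wm : ℝ → ℝ) {p : ℕ}
    (hp : 1 ≤ p) (hwp0 : ∀ t : ℝ, t < 0 → wp t = 0) (hwm0 : ∀ t : ℝ, 0 ≤ t → wm t = 0)
    (hwp1 : ∑ i, wp (x i) = 1) (hwm1 : ∑ i, wm (x i) = 1)
    (hmomp : ∀ j, 1 ≤ j → j ≤ p - 1 → ∑ i, x i ^ j * wp (x i) = 0)
    (hmomm : ∀ j, 1 ≤ j → j ≤ p - 1 → ∑ i, x i ^ j * wm (x i) = 0)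
    (a b : ℕ → ℝ) (rp rm : ℝ → ℝ) :
    (∑ i, (wp (x i) - wm (x i)) *
        (if 0 ≤ x i then (∑ j ∈ range p, a j * x i ^ j) + rp (x i)
         else (∑ j ∈ range p, b j * x i ^ j) + rm (x i))) - (a 0 - b 0) =
      ∑ i, (wp (x i) * rp (x i) - wm (x i) * rm (x i)) := by
  have hsplit : ∀ i, (wp (x i) - wm (x i)) *
      (if 0 ≤ x i then (∑ j ∈ range p, a j * x i ^ j) + rp (x i)
       else (∑ j ∈ range p, b j * x i ^ j) + rm (x i)) =
      (wp (x i) * ∑ j ∈ range p, a j * x i ^ j - wm (x i) * ∑ j ∈ range p, b j * x i ^ j) +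
        (wp (x i) * rp (x i) - wm (x i) * rm (x i)) := by
    intro i
    by_cases h : 0 ≤ x i
    · rw [if_pos h, hwm0 _ h]; ring
    · rw [if_neg h, hwp0 _ (not_le.1 h)]; ring
  rw [sum_congr rfl fun i _ => hsplit i, sum_add_distrib, sum_sub_distrib,
    sum_mul_sum_range_eq_of_moments x wp hp hwp1 hmomp,
    sum_mul_sum_range_eq_of_moments x wm hp hwm1 hmomm]
  ring

/-- Worst-case bias of a linear RD estimator over the Taylor class F_{RDT,p}(C). -/
theorem rd_worst_case_bias (n p : ℕ) (hp : 1 ≤ p) (x : Fin n → ℝ)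
    (C : ℝ) (hC : 0 ≤ C) (wp wm : ℝ → ℝ)
    (hwp0 : ∀ t : ℝ, t < 0 → wp t = 0)
    (hwm0 : ∀ t : ℝ, 0 ≤ t → wm t = 0)
    (hwp1 : ∑ i, wp (x i) = 1) (hwm1 : ∑ i, wm (x i) = 1)
    (hmomp : ∀ j, 1 ≤ j → j ≤ p - 1 → ∑ i, (x i) ^ j * wp (x i) = 0)
    (hmomm : ∀ j, 1 ≤ j → j ≤ p - 1 → ∑ i, (x i) ^ j * wm (x i) = 0) :
    sSup {bias : ℝ | ∃ a b : ℕ → ℝ, ∃ rp rm : ℝ → ℝ,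
        (∀ t : ℝ, |rp t| ≤ C * |t| ^ p) ∧ (∀ t : ℝ, |rm t| ≤ C * |t| ^ p) ∧
        bias = (∑ i, (wp (x i) - wm (x i)) *
            (if 0 ≤ x i then (∑ j ∈ Finset.range p, a j * (x i) ^ j) + rp (x i)
             else (∑ j ∈ Finset.range p, b j * (x i) ^ j) + rm (x i)))
          - (a 0 - b 0)} =
      C * ∑ i, |wp (x i) + wm (x i)| * |x i| ^ p := by
  have hsupp : ∀ t, wp t = 0 ∨ wm t = 0 := fun t =>
    (lt_or_ge t 0).imp (hwp0 t) (hwm0 t)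
  have hbias := rd_bias_eq_sum_remainder x wp wm hp hwp0 hwm0 hwp1 hwm1 hmomp hmomm
  have hCt : ∀ t : ℝ, 0 ≤ C * |t| ^ p := fun t => by positivity
  simp_rw [mul_sum, mul_left_comm C]
  refine IsGreatest.csSup_eq ⟨?_, ?_⟩
  · let rp t := C * |t| ^ p * (SignType.sign (wp t) : ℝ)
    let rm t := -(C * |t| ^ p * (SignType.sign (wm t) : ℝ))
    refine ⟨0, 0, rp, rm, fun t => abs_mul_sign_le (hCt t) _,
      fun t => (abs_neg _).trans_le (abs_mul_sign_le (hCt t) _), ?_⟩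
    rw [hbias]
    exact (sum_congr rfl fun i _ => mul_sub_mul_sign_eq_abs_add_mul (hsupp (x i))).symm
  · rintro _ ⟨a, b, rp, rm, hrp, hrm, rfl⟩
    rw [hbias]
    exact sum_le_sum fun i _ => mul_sub_mul_le_abs_add_mul (hsupp (x i)) (hrp _) (hrm _)
end

section
/- Let Z ~ N(b, 1) with |b| ≤ B for some B ≥ 0, and let cv_α(B) denote the 1−α quantile of |N(B,1)|. Then P(|Z| ≤ cv_α(B)) ≥ 1 − α. -/
/-!
Let `f` be continuous, symmetric and unimodal: `f y ≤ f x` whenever `|x| ≤ |y|`. The mass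
`F t = ∫ x in t - c..t + c, f x` of the window of half-width `c` centred at `t` is even in `t`,
and for `t ≥ 0` its derivative `f (t + c) - f (t - c)` is nonpositive since `|t - c| ≤ |t + c|`.
So `F` decreases in `|t|`. Taking for `f` the centred Gaussian density, `N(μ, v)` gives
`{x | |x| ≤ c}` the mass `F (-μ)`.
-/

open ProbabilityTheory MeasureTheory intervalIntegral Set

section SymmetricUnimodal

variable {f : ℝ → ℝ}

theorem hasDerivAt_integral_sub_add (hf : Continuous f) (c t : ℝ) :
    HasDerivAt (fun s => ∫ x in (s - c)..(s + c), f x) (f (t + c) - f (t - c)) t := by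
  have hG (a : ℝ) : HasDerivAt (fun s => ∫ x in (0 : ℝ)..(s + a), f x) (f (t + a)) t :=
    (hf.integral_hasStrictDerivAt 0 (t + a)).hasDerivAt.comp_add_const t a
  have h_split : (fun s => ∫ x in (s - c)..(s + c), f x) =
      fun s => (∫ x in (0 : ℝ)..(s + c), f x) - ∫ x in (0 : ℝ)..(s + -c), f x := by
    ext s
    rw [integral_interval_sub_left (hf.intervalIntegrable _ _) (hf.intervalIntegrable _ _),
      sub_eq_add_neg]
  rw [h_split, sub_eq_add_neg t]
  exact (hG c).sub (hG (-c))

theorem antitoneOn_integral_sub_add (hf : Continuous f) (hf_mono : ∀ x y, |x| ≤ |y| → f y ≤ f x)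
    {c : ℝ} (hc : 0 ≤ c) : AntitoneOn (fun t => ∫ x in (t - c)..(t + c), f x) (Ici 0) := by
  refine antitoneOn_of_hasDerivWithinAt_nonpos (convex_Ici 0)
    (fun t _ => (hasDerivAt_integral_sub_add hf c t).continuousAt.continuousWithinAt)
    (fun t _ => (hasDerivAt_integral_sub_add hf c t).hasDerivWithinAt) fun t ht => ?_
  rw [interior_Ici, mem_Ioi] at ht
  refine sub_nonpos.2 (hf_mono _ _ ?_)
  rw [abs_of_nonneg (by linarith : 0 ≤ t + c), abs_le]
  constructor <;> linarith

theorem integral_neg_sub_add (hf_even : ∀ x, f (-x) = f x) (c t : ℝ) :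
    ∫ x in (-t - c)..(-t + c), f x = ∫ x in (t - c)..(t + c), f x := by
  rw [show -t - c = -(t + c) by ring, show -t + c = -(t - c) by ring, ← integral_comp_neg]
  simp only [hf_even]

theorem integral_sub_add_le_of_abs_le (hf : Continuous f)
    (hf_mono : ∀ x y, |x| ≤ |y| → f y ≤ f x) {b B c : ℝ} (hc : 0 ≤ c) (h : |b| ≤ |B|) :
    ∫ x in (B - c)..(B + c), f x ≤ ∫ x in (b - c)..(b + c), f x := by
  have hf_even (x : ℝ) : f (-x) = f x :=
    le_antisymm (hf_mono _ _ (abs_neg x).ge) (hf_mono _ _ (abs_neg x).le)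
  have h_abs (t : ℝ) : ∫ x in (|t| - c)..(|t| + c), f x = ∫ x in (t - c)..(t + c), f x := by
    rcases abs_choice t with ht | ht <;> rw [ht]
    exact integral_neg_sub_add hf_even c t
  rw [← h_abs b, ← h_abs B]
  exact antitoneOn_integral_sub_add hf hf_mono hc (abs_nonneg b) (abs_nonneg B) h

end SymmetricUnimodal

theorem gaussianPDFReal_le_of_abs_le (v : NNReal) {x y : ℝ} (h : |x| ≤ |y|) :
    gaussianPDFReal 0 v y ≤ gaussianPDFReal 0 v x := by
  have hsq : x ^ 2 ≤ y ^ 2 := sq_le_sq.2 h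
  simp only [gaussianPDFReal, sub_zero]
  gcongr

theorem gaussianReal_setOf_abs_le (μ : ℝ) {v : NNReal} (hv : v ≠ 0) {c : ℝ} (hc : 0 ≤ c) :
    gaussianReal μ v {x | |x| ≤ c} =
      ENNReal.ofReal (∫ x in (-μ - c)..(-μ + c), gaussianPDFReal 0 v x) := by
  have h_Icc : {x : ℝ | |x| ≤ c} = Icc (-c) c := ext fun _ => by simp [abs_le]
  have h_shift (x : ℝ) : gaussianPDFReal μ v x = gaussianPDFReal 0 v (x - μ) := by
    rw [gaussianPDFReal_sub, zero_add]
  rw [gaussianReal_apply_eq_integral μ hv, h_Icc, integral_Icc_eq_integral_Ioc,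
    ← integral_of_le (by linarith)]
  simp only [h_shift, integral_comp_sub_right]
  congr 2 <;> ring

theorem gaussianReal_setOf_abs_le_le {v : NNReal} (hv : v ≠ 0) {b B : ℝ} (h : |b| ≤ |B|)
    (c : ℝ) : gaussianReal B v {x | |x| ≤ c} ≤ gaussianReal b v {x | |x| ≤ c} := by
  rcases lt_or_ge c 0 with hc | hc
  · have : {x : ℝ | |x| ≤ c} = ∅ := eq_empty_of_forall_notMem fun x hx => by
      linarith [abs_nonneg x, hx.out]
    simp [this]
  rw [gaussianReal_setOf_abs_le B hv hc, gaussianReal_setOf_abs_le b hv hc]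
  gcongr 1
  refine integral_sub_add_le_of_abs_le ?_ (fun x y => gaussianPDFReal_le_of_abs_le v) hc
    (by rwa [abs_neg, abs_neg])
  unfold gaussianPDFReal
  fun_prop

theorem cv_coverage_general (α B b c : ℝ)
    (hb : |b| ≤ B)
    (hc : gaussianReal B 1 {x : ℝ | |x| ≤ c} = ENNReal.ofReal (1 - α)) :
    ENNReal.ofReal (1 - α) ≤ gaussianReal b 1 {x : ℝ | |x| ≤ c} :=
  hc ▸ gaussianReal_setOf_abs_le_le one_ne_zero (hb.trans (le_abs_self B)) c

/-- Coverage of the critical value cv_α(B): if |b| ≤ B then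
P(|N(b,1)| ≤ cv_α(B)) ≥ 1 − α. -/
theorem cv_coverage (α B b c : ℝ) (hα0 : 0 < α) (hα1 : α < 1)
    (hB : 0 ≤ B) (hb : |b| ≤ B)
    (hc : gaussianReal B 1 {x : ℝ | |x| ≤ c} = ENNReal.ofReal (1 - α)) :
    ENNReal.ofReal (1 - α) ≤ gaussianReal b 1 {x : ℝ | |x| ≤ c} :=
  cv_coverage_general α B b c hb hc
end

section
/- In the Gaussian model Y ~ N(μ, σ²Iₙ) with μ constrained to convex set M₀ under H₀ and convex set M₁ under H₁, suppose μ₀* ∈ M₀ and μ₁* ∈ M₁ minimize the Euclidean distance ‖μ₁ − μ₀‖ over M₀ × M₁. Then the Neyman–Pearson test of μ₀* versus μ₁*, which rejects when (μ₁* − μ₀*)'Y exceeds its 1−α quantile under μ₀*, has size at most α over all of M₀; i.e., for every μ ∈ M₀, P_μ((μ₁*−μ₀*)'Y > (μ₁*−μ₀*)'μ₀* + σ‖μ₁*−μ₀*‖ z_{1−α}) ≤ α. -/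
/-!
Since `μ₀*` is the nearest point of the convex set `M₀` to `μ₁*`, the projection
characterization gives `⟪μ₁* - μ₀*, μ⟫ ≤ ⟪μ₁* - μ₀*, μ₀*⟫` for every `μ ∈ M₀`. So under any
`μ ∈ M₀` the test statistic is Gaussian with the same variance as under `μ₀*` but a smaller
mean, and its exceedance probability of the critical value is at most the one under `μ₀*`,
which is `α` by the choice of `z`.
-/

open ProbabilityTheory MeasureTheory Set

open scoped RealInnerProductSpace in
theorem real_inner_sub_nonpos_of_forall_norm_sub_le {F : Type*} [NormedAddCommGroup F]
    [InnerProductSpace ℝ F] {K : Set F} (hK : Convex ℝ K) {u v : F} (hv : v ∈ K)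
    (h : ∀ w ∈ K, ‖u - v‖ ≤ ‖u - w‖) : ∀ w ∈ K, ⟪u - v, w - v⟫ ≤ 0 := by
  have : Nonempty K := ⟨⟨v, hv⟩⟩
  have hbdd : BddBelow (range fun w : K => ‖u - w‖) :=
    ⟨0, forall_mem_range.2 fun _ => norm_nonneg _⟩
  exact (norm_eq_iInf_iff_real_inner_le_zero hK hv).1 <|
    le_antisymm (le_ciInf fun w => h w w.2) (ciInf_le hbdd ⟨v, hv⟩)

theorem gaussianReal_eq_map_affine (m s : ℝ) :
    gaussianReal m (s ^ 2).toNNReal = (gaussianReal 0 1).map (fun x => s * x + m) := by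
  change _ = (gaussianReal 0 1).map ((· + m) ∘ (s * ·))
  rw [← Measure.map_map (by fun_prop) (by fun_prop),
    gaussianReal_map_const_mul, gaussianReal_map_add_const]
  congr
  · ring
  · ext
    simp [sq_nonneg]

theorem gaussianReal_Ioi_add_mul {s : ℝ} (hs : 0 < s) (m z : ℝ) :
    gaussianReal m (s ^ 2).toNNReal (Ioi (m + s * z)) = gaussianReal 0 1 (Ioi z) := by
  rw [gaussianReal_eq_map_affine, Measure.map_apply (by fun_prop) measurableSet_Ioi]
  congr 1
  ext x
  simp only [mem_preimage, mem_Ioi]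
  rw [add_comm m, add_lt_add_iff_right, mul_lt_mul_iff_right₀ hs]

theorem measure_Ioi_le_of_measure_Iic_eq {P : Measure ℝ} [IsProbabilityMeasure P] {z α : ℝ}
    (hz : P (Iic z) = ENNReal.ofReal (1 - α)) : P (Ioi z) ≤ ENNReal.ofReal α := by
  rw [← compl_Iic, prob_compl_eq_one_sub measurableSet_Iic, hz, tsub_le_iff_right]
  calc (1 : ENNReal) = ENNReal.ofReal (α + (1 - α)) := by simp
    _ ≤ ENNReal.ofReal α + ENNReal.ofReal (1 - α) := ENNReal.ofReal_add_le

theorem minimax_test_size_general (n : ℕ) (M₀ M₁ : Set (EuclideanSpace ℝ (Fin n)))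
    (hM₀ : Convex ℝ M₀)
    (μ₀ μ₁ : EuclideanSpace ℝ (Fin n)) (hμ₀ : μ₀ ∈ M₀) (hμ₁ : μ₁ ∈ M₁)
    (hmin : ∀ a ∈ M₀, ∀ b ∈ M₁, ‖μ₁ - μ₀‖ ≤ ‖b - a‖)
    (hpos : 0 < ‖μ₁ - μ₀‖)
    (σ : ℝ) (hσ : 0 < σ) (α z : ℝ)
    (hz : gaussianReal 0 1 {t : ℝ | t ≤ z} = ENNReal.ofReal (1 - α)) :
    ∀ μ ∈ M₀,
      gaussianReal (inner ℝ (μ₁ - μ₀) μ : ℝ)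
          (Real.toNNReal (σ ^ 2 * ‖μ₁ - μ₀‖ ^ 2))
          {t : ℝ | (inner ℝ (μ₁ - μ₀) μ₀ : ℝ) + σ * ‖μ₁ - μ₀‖ * z < t}
        ≤ ENNReal.ofReal α := by
  intro μ hμ
  have hproj := real_inner_sub_nonpos_of_forall_norm_sub_le hM₀ hμ₀
    (fun w hw => hmin w hw μ₁ hμ₁) μ hμ
  have hmean : inner ℝ (μ₁ - μ₀) μ ≤ inner ℝ (μ₁ - μ₀) μ₀ := by
    rw [inner_sub_right] at hproj
    linarith
  have hthreshold : {t : ℝ | (inner ℝ (μ₁ - μ₀) μ₀ : ℝ) + σ * ‖μ₁ - μ₀‖ * z < t} ⊆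
      Ioi (inner ℝ (μ₁ - μ₀) μ + σ * ‖μ₁ - μ₀‖ * z) :=
    Ioi_subset_Ioi (by linarith)
  calc _ ≤ _ := measure_mono hthreshold
    _ = gaussianReal 0 1 (Ioi z) := by
      rw [← mul_pow, gaussianReal_Ioi_add_mul (mul_pos hσ hpos)]
    _ ≤ ENNReal.ofReal α := measure_Ioi_le_of_measure_Iic_eq hz

/-- Size control of the minimax (Neyman–Pearson) test over the convex null set M₀:
under any μ ∈ M₀, the statistic ⟨μ₁*−μ₀*, Y⟩ ~ N(⟨μ₁*−μ₀*, μ⟩, σ²‖μ₁*−μ₀*‖²) exceeds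
the critical value with probability at most α. -/
theorem minimax_test_size (n : ℕ) (M₀ M₁ : Set (EuclideanSpace ℝ (Fin n)))
    (hM₀ : Convex ℝ M₀) (hM₁ : Convex ℝ M₁)
    (μ₀ μ₁ : EuclideanSpace ℝ (Fin n)) (hμ₀ : μ₀ ∈ M₀) (hμ₁ : μ₁ ∈ M₁)
    (hmin : ∀ a ∈ M₀, ∀ b ∈ M₁, ‖μ₁ - μ₀‖ ≤ ‖b - a‖)
    (hpos : 0 < ‖μ₁ - μ₀‖)
    (σ : ℝ) (hσ : 0 < σ) (α z : ℝ) (hα0 : 0 < α) (hα1 : α < 1)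
    (hz : gaussianReal 0 1 {t : ℝ | t ≤ z} = ENNReal.ofReal (1 - α)) :
    ∀ μ ∈ M₀,
      gaussianReal (inner ℝ (μ₁ - μ₀) μ : ℝ)
          (Real.toNNReal (σ ^ 2 * ‖μ₁ - μ₀‖ ^ 2))
          {t : ℝ | (inner ℝ (μ₁ - μ₀) μ₀ : ℝ) + σ * ‖μ₁ - μ₀‖ * z < t}
        ≤ ENNReal.ofReal α :=
  minimax_test_size_general n M₀ M₁ hM₀ μ₀ μ₁ hμ₀ hμ₁ hmin hpos σ hσ α z hz
end

section
/- In the same setup, the minimum power of the minimax test over M₁ is attained at μ₁*: for every μ ∈ M₁, P_μ((μ₁*−μ₀*)'Y > (μ₁*−μ₀*)'μ₀* + σ‖μ₁*−μ₀*‖ z_{1−α}) ≥ Φ(‖μ₁*−μ₀*‖/σ − z_{1−α}). -/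
/-!
Since `μ₁*` is the point of `M₁` nearest to `μ₀*`, the convex set `M₁` lies in the half-space
`{μ | ⟪v, μ⟫ ≥ ⟪v, μ₁*⟫ = ⟪v, μ₀*⟫ + ‖v‖²}` with `v = μ₁* − μ₀*`. The statistic `⟪v, Y⟫` is
`N(⟪v, μ⟫, σ²‖v‖²)`, so after standardising, the rejection probability is `Φ` evaluated at
`(⟪v, μ⟫ − ⟪v, μ₀*⟫)/(σ‖v‖) − z ≥ ‖v‖/σ − z`, and `Φ` is monotone.
-/

open MeasureTheory ProbabilityTheory Set

theorem inner_le_inner_of_forall_norm_sub_le {F : Type*} [NormedAddCommGroup F]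
    [InnerProductSpace ℝ F] {K : Set F} (hK : Convex ℝ K) {x y : F} (hy : y ∈ K)
    (hmin : ∀ b ∈ K, ‖y - x‖ ≤ ‖b - x‖) {b : F} (hb : b ∈ K) :
    inner ℝ (y - x) y ≤ inner ℝ (y - x) b := by
  have hinf : ‖x - y‖ = ⨅ w : K, ‖x - w‖ := by
    have : Nonempty K := ⟨⟨y, hy⟩⟩
    refine le_antisymm (le_ciInf fun w => ?_)
      (ciInf_le (f := fun w : K => ‖x - w‖) ⟨0, ?_⟩ ⟨y, hy⟩)
    · simpa only [norm_sub_rev x] using hmin w w.2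
    · rintro _ ⟨w, rfl⟩
      exact norm_nonneg _
  have := (norm_eq_iInf_iff_real_inner_le_zero hK hy).mp hinf b hb
  rw [← neg_sub y x, inner_neg_left, inner_sub_right] at this
  linarith

theorem gaussianReal_map_standardize (m : ℝ) {v : NNReal} (hv : v ≠ 0) :
    (gaussianReal m v).map (fun x => (m - x) / √v) = gaussianReal 0 1 := by
  have : (fun x => (m - x) / √v) = (· / √v) ∘ (m - ·) := rfl
  rw [this, ← Measure.map_map (by fun_prop) (by fun_prop), gaussianReal_map_const_sub,
    gaussianReal_map_div_const, sub_self, zero_div]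
  congr 1
  ext
  simp [hv]

theorem gaussianReal_Ioi (m a : ℝ) {v : NNReal} (hv : v ≠ 0) :
    gaussianReal m v (Ioi a) = gaussianReal 0 1 (Iic ((m - a) / √v)) := by
  have hs : 0 < √(v : ℝ) := Real.sqrt_pos.mpr (NNReal.coe_pos.mpr (pos_iff_ne_zero.mpr hv))
  have hpre : (fun x => (m - x) / √v) ⁻¹' Iio ((m - a) / √v) = Ioi a := by
    ext x
    simp [div_lt_div_iff_of_pos_right hs]
  rw [← hpre, ← Measure.map_apply (by fun_prop) measurableSet_Iio,
    gaussianReal_map_standardize m hv]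
  exact measure_congr (Iio_ae_eq_Iic' (gaussianReal_absolutelyContinuous 0 one_ne_zero (by simp)))

theorem minimax_test_power_general (n : ℕ) (M₀ M₁ : Set (EuclideanSpace ℝ (Fin n)))
    (hM₁ : Convex ℝ M₁)
    (μ₀ μ₁ : EuclideanSpace ℝ (Fin n)) (hμ₀ : μ₀ ∈ M₀) (hμ₁ : μ₁ ∈ M₁)
    (hmin : ∀ a ∈ M₀, ∀ b ∈ M₁, ‖μ₁ - μ₀‖ ≤ ‖b - a‖)
    (hpos : 0 < ‖μ₁ - μ₀‖)
    (σ : ℝ) (hσ : 0 < σ) (z : ℝ) :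
    ∀ μ ∈ M₁,
      gaussianReal 0 1 {s : ℝ | s ≤ ‖μ₁ - μ₀‖ / σ - z}
        ≤ gaussianReal (inner ℝ (μ₁ - μ₀) μ : ℝ)
            (Real.toNNReal (σ ^ 2 * ‖μ₁ - μ₀‖ ^ 2))
            {t : ℝ | (inner ℝ (μ₁ - μ₀) μ₀ : ℝ) + σ * ‖μ₁ - μ₀‖ * z < t} := by
  intro μ hμ
  set v := μ₁ - μ₀
  have hc : 0 < σ * ‖v‖ := mul_pos hσ hpos
  have hhalf : inner ℝ v μ₀ + ‖v‖ ^ 2 ≤ inner ℝ v μ := by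
    rw [← real_inner_self_eq_norm_sq, ← inner_add_right, add_sub_cancel]
    exact inner_le_inner_of_forall_norm_sub_le hM₁ hμ₁ (hmin μ₀ hμ₀) hμ
  have hvar : Real.toNNReal (σ ^ 2 * ‖v‖ ^ 2) ≠ 0 := by positivity
  have hsd : √(Real.toNNReal (σ ^ 2 * ‖v‖ ^ 2) : ℝ) = σ * ‖v‖ := by
    rw [Real.coe_toNNReal _ (by positivity), ← mul_pow, Real.sqrt_sq hc.le]
  change _ ≤ gaussianReal _ _ (Ioi _)
  rw [gaussianReal_Ioi _ _ hvar, hsd]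
  refine measure_mono (Iic_subset_Iic.mpr ?_)
  rw [le_div_iff₀ hc]
  have : (‖v‖ / σ - z) * (σ * ‖v‖) = ‖v‖ ^ 2 - σ * ‖v‖ * z := by field_simp
  linarith

/-- The minimum power of the minimax test over the convex alternative M₁ is
attained at μ₁*: for every μ ∈ M₁ the rejection probability is at least
Φ(‖μ₁*−μ₀*‖/σ − z_{1−α}). -/
theorem minimax_test_power (n : ℕ) (M₀ M₁ : Set (EuclideanSpace ℝ (Fin n)))
    (hM₀ : Convex ℝ M₀) (hM₁ : Convex ℝ M₁)
    (μ₀ μ₁ : EuclideanSpace ℝ (Fin n)) (hμ₀ : μ₀ ∈ M₀) (hμ₁ : μ₁ ∈ M₁)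
    (hmin : ∀ a ∈ M₀, ∀ b ∈ M₁, ‖μ₁ - μ₀‖ ≤ ‖b - a‖)
    (hpos : 0 < ‖μ₁ - μ₀‖)
    (σ : ℝ) (hσ : 0 < σ) (α z : ℝ) (hα0 : 0 < α) (hα1 : α < 1)
    (hz : gaussianReal 0 1 {t : ℝ | t ≤ z} = ENNReal.ofReal (1 - α)) :
    ∀ μ ∈ M₁,
      gaussianReal 0 1 {s : ℝ | s ≤ ‖μ₁ - μ₀‖ / σ - z}
        ≤ gaussianReal (inner ℝ (μ₁ - μ₀) μ : ℝ)
            (Real.toNNReal (σ ^ 2 * ‖μ₁ - μ₀‖ ^ 2))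
            {t : ℝ | (inner ℝ (μ₁ - μ₀) μ₀ : ℝ) + σ * ‖μ₁ - μ₀‖ * z < t} :=
  minimax_test_power_general n M₀ M₁ hM₁ μ₀ μ₁ hμ₀ hμ₁ hmin hpos σ hσ z
end

section
/- For the affine estimator L̂ with worst-case bias over F bounded by B̄ = max{|sup_f bias_f|, |inf_f bias_f|} < ∞, the fixed-length interval L̂ ± cv_α(B̄/(σ‖w‖))·σ‖w‖ has coverage at least 1−α for Lf uniformly over f ∈ F. -/
/-!
Standardizing by `σ‖w‖`, the coverage probability at `f` is `P(|N(bias f / (σ‖w‖), 1)| ≤ cv)`.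
For a density that is even and decreasing in `|x|`, the mass of the window `[-c - t, c - t]`
decreases as `|t|` grows: moving the window right by `t₂ - t₁ ≥ 0` trades a piece of it for its
reflection about `c`, which lies farther from the origin. Since `|bias f| ≤ B̄`, the coverage is
therefore at least `P(|N(B̄ / (σ‖w‖), 1)| ≤ cv) = 1 - α`.
-/

open ProbabilityTheory MeasureTheory Set

theorem intervalIntegral_window_antitoneOn {φ : ℝ → ℝ} (hφ : Integrable φ)
    (hφ_unimodal : ∀ y z : ℝ, |y| ≤ |z| → φ z ≤ φ y) {c : ℝ} (hc : 0 ≤ c) :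
    AntitoneOn (fun t ↦ ∫ x in (-c - t)..(c - t), φ x) (Ici 0) := by
  intro t₁ (ht₁ : 0 ≤ t₁) t₂ _ ht
  have hφi : ∀ a b : ℝ, IntervalIntegrable φ volume a b := fun _ _ ↦ hφ.intervalIntegrable
  have hsplit : (∫ x in (-c - t₂)..(c - t₂), φ x) + ∫ x in (c - t₂)..(c - t₁), φ x
      = (∫ x in (-c - t₂)..(-c - t₁), φ x) + ∫ x in (-c - t₁)..(c - t₁), φ x := by
    rw [intervalIntegral.integral_add_adjacent_intervals (hφi _ _) (hφi _ _),
      intervalIntegral.integral_add_adjacent_intervals (hφi _ _) (hφi _ _)]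
  have hshift : ∫ x in (-c - t₂)..(-c - t₁), φ x = ∫ x in (c - t₂)..(c - t₁), φ (x - 2 * c) := by
    rw [intervalIntegral.integral_comp_sub_right]
    ring_nf
  have hfar : ∫ x in (c - t₂)..(c - t₁), φ (x - 2 * c) ≤ ∫ x in (c - t₂)..(c - t₁), φ x := by
    refine intervalIntegral.integral_mono_on (by linarith)
      (hφ.comp_sub_right _).intervalIntegrable (hφi _ _) fun x hx ↦ hφ_unimodal _ _ ?_
    rw [abs_sub_comm]
    exact abs_le_abs (by linarith [hx.2]) (by linarith)
  linarith

theorem measurableSet_abs_le (c : ℝ) : MeasurableSet {x : ℝ | |x| ≤ c} :=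
  measurableSet_le measurable_abs measurable_const

theorem gaussianPDFReal_zero_le_of_abs_le (v : NNReal) {y z : ℝ} (h : |y| ≤ |z|) :
    gaussianPDFReal 0 v z ≤ gaussianPDFReal 0 v y := by
  simp only [gaussianPDFReal, sub_zero]
  gcongr ?_ * Real.exp (?_ / _)
  exact neg_le_neg (sq_le_sq.mpr h)

theorem gaussianReal_abs_le_eq_intervalIntegral (t : ℝ) {v : NNReal} (hv : v ≠ 0) {c : ℝ}
    (hc : 0 ≤ c) :
    gaussianReal t v {x | |x| ≤ c} =
      ENNReal.ofReal (∫ x in (-c - t)..(c - t), gaussianPDFReal 0 v x) := by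
  have hpre : (· + t) ⁻¹' {x : ℝ | |x| ≤ c} = Icc (-c - t) (c - t) := by
    ext x
    simp only [mem_preimage, mem_ofPred_eq, abs_le, mem_Icc]
    constructor <;> rintro ⟨h₁, h₂⟩ <;> constructor <;> linarith
  have hshift : gaussianReal t v = (gaussianReal 0 v).map (· + t) := by
    rw [gaussianReal_map_add_const, zero_add]
  rw [hshift, Measure.map_apply (measurable_add_const t) (measurableSet_abs_le c), hpre,
    gaussianReal_apply_eq_integral _ hv, integral_Icc_eq_integral_Ioc,
    ← intervalIntegral.integral_of_le (by linarith)]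

theorem gaussianReal_abs_le_antitoneOn {v : NNReal} (hv : v ≠ 0) (c : ℝ) :
    AntitoneOn (fun t ↦ gaussianReal t v {x | |x| ≤ c}) (Ici 0) := by
  rcases lt_or_ge c 0 with hc | hc
  · have hempty : {x : ℝ | |x| ≤ c} = ∅ :=
      eq_empty_of_forall_notMem fun x hx ↦ (abs_nonneg x).not_gt (hx.trans_lt hc)
    simp [hempty, AntitoneOn]
  intro t₁ ht₁ t₂ ht₂ ht
  simp only [gaussianReal_abs_le_eq_intervalIntegral _ hv hc]
  exact ENNReal.ofReal_le_ofReal <| intervalIntegral_window_antitoneOn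
    (integrable_gaussianPDFReal 0 v) (fun _ _ ↦ gaussianPDFReal_zero_le_of_abs_le v) hc ht₁ ht₂ ht

theorem gaussianReal_neg_abs_le (t : ℝ) (v : NNReal) (c : ℝ) :
    gaussianReal (-t) v {x | |x| ≤ c} = gaussianReal t v {x | |x| ≤ c} := by
  rw [← gaussianReal_map_neg, Measure.map_apply measurable_neg (measurableSet_abs_le c)]
  simp only [preimage_ofPred_eq, abs_neg]

theorem gaussianReal_abs_le_le_of_abs_le {v : NNReal} (hv : v ≠ 0) (c : ℝ) {t T : ℝ}
    (h : |t| ≤ |T|) : gaussianReal T v {x | |x| ≤ c} ≤ gaussianReal t v {x | |x| ≤ c} := by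
  have habs : ∀ s : ℝ, gaussianReal |s| v {x | |x| ≤ c} = gaussianReal s v {x | |x| ≤ c} := by
    intro s
    rcases abs_choice s with hs | hs <;> rw [hs]
    exact gaussianReal_neg_abs_le s v c
  rw [← habs t, ← habs T]
  exact gaussianReal_abs_le_antitoneOn hv c (abs_nonneg t) (abs_nonneg T) h

theorem gaussianReal_sq_abs_le_mul {s : ℝ} (hs : 0 < s) (μ c : ℝ) :
    gaussianReal μ (Real.toNNReal (s ^ 2)) {x | |x| ≤ c * s} =
      gaussianReal (μ / s) 1 {x | |x| ≤ c} := by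
  have hstd : (gaussianReal μ (Real.toNNReal (s ^ 2))).map (· / s) = gaussianReal (μ / s) 1 := by
    rw [gaussianReal_map_div_const]
    congr
    ext
    simp [max_eq_left (sq_nonneg s), hs.ne']
  rw [← hstd, Measure.map_apply (measurable_div_const s) (measurableSet_abs_le c)]
  congr 1
  ext x
  simp only [mem_preimage, mem_ofPred_eq, abs_div, abs_of_pos hs, div_le_iff₀ hs]

theorem fixed_length_ci_coverage_general {V Y : Type*} [NormedAddCommGroup Y] (F : Set V)
    (w : Y) (σ : ℝ) (hσ : 0 < σ) (hw : 0 < ‖w‖) (bias : V → ℝ)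
    (Bbar : ℝ) (hB : ∀ f ∈ F, |bias f| ≤ Bbar) (α cv : ℝ)
    (hcv : gaussianReal (Bbar / (σ * ‖w‖)) 1 {x : ℝ | |x| ≤ cv} =
      ENNReal.ofReal (1 - α)) :
    ∀ f ∈ F, ENNReal.ofReal (1 - α) ≤
      gaussianReal (bias f) (Real.toNNReal (σ ^ 2 * ‖w‖ ^ 2))
        {t : ℝ | |t| ≤ cv * (σ * ‖w‖)} := by
  intro f hf
  have hs : 0 < σ * ‖w‖ := mul_pos hσ hw
  rw [← mul_pow, gaussianReal_sq_abs_le_mul hs, ← hcv]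
  refine gaussianReal_abs_le_le_of_abs_le one_ne_zero cv ?_
  rw [abs_div, abs_div]
  exact div_le_div_of_nonneg_right ((hB f hf).trans (le_abs_self Bbar)) (abs_nonneg _)

/-- The fixed-length CI L̂ ± cv_α(B̄/(σ‖w‖))·σ‖w‖ has coverage at least 1−α
uniformly over F, where |L̂ − Lf| ~ |N(bias_f, σ²‖w‖²)| and |bias_f| ≤ B̄. -/
theorem fixed_length_ci_coverage {V Y : Type*} [AddCommGroup V] [Module ℝ V]
    [NormedAddCommGroup Y] [InnerProductSpace ℝ Y]
    (K : V →ₗ[ℝ] Y) (L : V →ₗ[ℝ] ℝ) (F : Set V) (hF : Convex ℝ F)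
    (w : Y) (a σ : ℝ) (hσ : 0 < σ) (hw : 0 < ‖w‖)
    (bias : V → ℝ) (hbias : ∀ f, bias f = a + (inner ℝ w (K f) : ℝ) - L f)
    (Bbar : ℝ) (hB : ∀ f ∈ F, |bias f| ≤ Bbar)
    (α cv : ℝ) (hα0 : 0 < α) (hα1 : α < 1)
    (hcv : gaussianReal (Bbar / (σ * ‖w‖)) 1 {x : ℝ | |x| ≤ cv} =
      ENNReal.ofReal (1 - α)) :
    ∀ f ∈ F, ENNReal.ofReal (1 - α) ≤
      gaussianReal (bias f) (Real.toNNReal (σ ^ 2 * ‖w‖ ^ 2))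
        {t : ℝ | |t| ≤ cv * (σ * ‖w‖)} :=
  fixed_length_ci_coverage_general F w σ hσ hw bias Bbar hB α cv hcv
end

section
/- In the RD model with Lipschitz class F_{RDT,1}(C) and homoskedastic errors, the functions g*(x) = 1{x≥0}(L₀+b) + C h₊ k₊(x/h₊) − C h₋ k₋(x/h₋) and f*(x) = 2·1{x≥0}(L₀+b) − g*(x), where k(u) = max{0, 1−|u|}, k₊(u) = k(u)1{u≥0}, k₋(u) = k(u)1{u<0}, and h₊ + h₋ = b/C, satisfy: f*, g* ∈ F_{RDT,1}(C) (up to the intercept shift), L f* = L₀, and L g* = L₀ + 2b, where Lf = f₊(0) − f₋(0). -/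
/-! The tent `k u = max 0 (1 - |u|)` satisfies `|k u - 1| ≤ |u|`, so `C h k (x / h)` stays within
`C |x|` of its value `C h` at `0`; the two tents then add `C h₊ + C h₋ = b` to each side of the jump. -/

open Filter Topology

lemma abs_max_zero_one_sub_abs_sub_one_le (u : ℝ) : |max 0 (1 - |u|) - 1| ≤ |u| := by
  rcases le_total (1 - |u|) 0 with h | h
  · rw [max_eq_left h, abs_of_nonpos (by norm_num)]; linarith
  · rw [max_eq_right h, abs_of_nonpos (by linarith [abs_nonneg u])]; linarith

lemma abs_mul_tent_sub_le {C h : ℝ} (hC : 0 ≤ C) (hh : 0 < h) (x : ℝ) :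
    |C * h * max 0 (1 - |x / h|) - C * h| ≤ C * |x| :=
  calc |C * h * max 0 (1 - |x / h|) - C * h|
      = C * h * |max 0 (1 - |x / h|) - 1| := by
        rw [← mul_sub_one, abs_mul, abs_of_nonneg (by positivity)]
    _ ≤ C * h * |x / h| :=
        mul_le_mul_of_nonneg_left (abs_max_zero_one_sub_abs_sub_one_le _) (by positivity)
    _ = C * |x| := by rw [abs_div, abs_of_pos hh]; field_simp

lemma tendsto_nhdsWithin_of_abs_sub_le {f : ℝ → ℝ} {s : Set ℝ} {a L C : ℝ}
    (h : ∀ x ∈ s, |f x - L| ≤ C * |x - a|) : Tendsto f (𝓝[s] a) (𝓝 L) := by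
  have hC : Tendsto (fun x => C * |x - a|) (𝓝[s] a) (𝓝 0) := by
    have : Tendsto (fun x => C * |x - a|) (𝓝 a) (𝓝 (C * |a - a|)) :=
      (by fun_prop : Continuous fun x => C * |x - a|).tendsto a
    simpa using this.mono_left nhdsWithin_le_nhds
  refine tendsto_iff_norm_sub_tendsto_zero.2 (squeeze_zero_norm' ?_ hC)
  filter_upwards [self_mem_nhdsWithin] with x hx
  simpa using h x hx

theorem rd_least_favorable_general (C b L₀ hPlus hMinus : ℝ)
    (hC : 0 < C) (hhp : 0 < hPlus) (hhm : 0 < hMinus)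
    (hsum : hPlus + hMinus = b / C)
    (k kp km : ℝ → ℝ)
    (hk : ∀ u, k u = max 0 (1 - |u|))
    (hkp : ∀ u, kp u = if 0 ≤ u then k u else 0)
    (hkm : ∀ u, km u = if u < 0 then k u else 0)
    (gp gm fp fm : ℝ → ℝ)
    (hgp : ∀ x, gp x = if 0 ≤ x then (L₀ + b) + C * hPlus * kp (x / hPlus) else 0)
    (hgm : ∀ x, gm x = if x < 0 then -(C * hMinus * km (x / hMinus)) else 0)
    (hfp : ∀ x, fp x =
      if 0 ≤ x then 2 * (L₀ + b) - ((L₀ + b) + C * hPlus * kp (x / hPlus)) else 0)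
    (hfm : ∀ x, fm x = if x < 0 then C * hMinus * km (x / hMinus) else 0) :
    (∀ x : ℝ, 0 ≤ x → |gp x - gp 0| ≤ C * |x|) ∧
    (∀ x : ℝ, x < 0 → |gm x - (-(C * hMinus))| ≤ C * |x|) ∧
    (∀ x : ℝ, 0 ≤ x → |fp x - fp 0| ≤ C * |x|) ∧
    (∀ x : ℝ, x < 0 → |fm x - (C * hMinus)| ≤ C * |x|) ∧
    Filter.Tendsto gm (nhdsWithin 0 (Set.Iio 0)) (nhds (-(C * hMinus))) ∧
    Filter.Tendsto fm (nhdsWithin 0 (Set.Iio 0)) (nhds (C * hMinus)) ∧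
    gp 0 - (-(C * hMinus)) = L₀ + 2 * b ∧
    fp 0 - (C * hMinus) = L₀ := by
  have hkp_of_nonneg {x} (hx : 0 ≤ x) : kp (x / hPlus) = max 0 (1 - |x / hPlus|) := by
    rw [hkp, if_pos (div_nonneg hx hhp.le), hk]
  have hkm_of_neg {x} (hx : x < 0) : km (x / hMinus) = max 0 (1 - |x / hMinus|) := by
    rw [hkm, if_pos (div_neg_of_neg_of_pos hx hhm), hk]
  have hkp0 : kp 0 = 1 := by simp [hkp, hk]
  have hgp0 : gp 0 = L₀ + b + C * hPlus := by simp [hgp, hkp0]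
  have hfp0 : fp 0 = L₀ + b - C * hPlus := by simp [hfp, hkp0]; ring
  have hgp_bound (x) (hx : 0 ≤ x) : |gp x - gp 0| ≤ C * |x| := by
    rw [hgp0, hgp, if_pos hx, hkp_of_nonneg hx]
    convert abs_mul_tent_sub_le hC.le hhp x using 2; ring
  have hgm_bound (x) (hx : x < 0) : |gm x - (-(C * hMinus))| ≤ C * |x| := by
    rw [hgm, if_pos hx, hkm_of_neg hx, ← abs_neg]
    convert abs_mul_tent_sub_le hC.le hhm x using 2; ring
  have hfp_bound (x) (hx : 0 ≤ x) : |fp x - fp 0| ≤ C * |x| := by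
    rw [hfp0, hfp, if_pos hx, hkp_of_nonneg hx, ← abs_neg]
    convert abs_mul_tent_sub_le hC.le hhp x using 2; ring
  have hfm_bound (x) (hx : x < 0) : |fm x - C * hMinus| ≤ C * |x| := by
    rw [hfm, if_pos hx, hkm_of_neg hx]
    exact abs_mul_tent_sub_le hC.le hhm x
  have hbandwidth : C * hPlus + C * hMinus = b := by
    rw [← mul_add, hsum]; field_simp
  refine ⟨hgp_bound, hgm_bound, hfp_bound, hfm_bound,
    tendsto_nhdsWithin_of_abs_sub_le fun x hx => by simpa using hgm_bound x hx,
    tendsto_nhdsWithin_of_abs_sub_le fun x hx => by simpa using hfm_bound x hx, ?_, ?_⟩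
  · rw [hgp0]; linarith
  · rw [hfp0]; linarith

/-- The least favorable functions f*, g* for the RD problem with Lipschitz class
F_{RDT,1}(C): they belong to the class (each piece Lipschitz-controlled around 0
with constant C) and satisfy Lg* = L₀ + 2b, Lf* = L₀. -/
theorem rd_least_favorable (C b L₀ hPlus hMinus : ℝ)
    (hC : 0 < C) (hb : 0 < b) (hhp : 0 < hPlus) (hhm : 0 < hMinus)
    (hsum : hPlus + hMinus = b / C)
    (k kp km : ℝ → ℝ)
    (hk : ∀ u, k u = max 0 (1 - |u|))
    (hkp : ∀ u, kp u = if 0 ≤ u then k u else 0)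
    (hkm : ∀ u, km u = if u < 0 then k u else 0)
    (gp gm fp fm : ℝ → ℝ)
    (hgp : ∀ x, gp x = if 0 ≤ x then (L₀ + b) + C * hPlus * kp (x / hPlus) else 0)
    (hgm : ∀ x, gm x = if x < 0 then -(C * hMinus * km (x / hMinus)) else 0)
    (hfp : ∀ x, fp x =
      if 0 ≤ x then 2 * (L₀ + b) - ((L₀ + b) + C * hPlus * kp (x / hPlus)) else 0)
    (hfm : ∀ x, fm x = if x < 0 then C * hMinus * km (x / hMinus) else 0) :
    (∀ x : ℝ, 0 ≤ x → |gp x - gp 0| ≤ C * |x|) ∧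
    (∀ x : ℝ, x < 0 → |gm x - (-(C * hMinus))| ≤ C * |x|) ∧
    (∀ x : ℝ, 0 ≤ x → |fp x - fp 0| ≤ C * |x|) ∧
    (∀ x : ℝ, x < 0 → |fm x - (C * hMinus)| ≤ C * |x|) ∧
    Filter.Tendsto gm (nhdsWithin 0 (Set.Iio 0)) (nhds (-(C * hMinus))) ∧
    Filter.Tendsto fm (nhdsWithin 0 (Set.Iio 0)) (nhds (C * hMinus)) ∧
    gp 0 - (-(C * hMinus)) = L₀ + 2 * b ∧
    fp 0 - (C * hMinus) = L₀ :=
  rd_least_favorable_general C b L₀ hPlus hMinus hC hhp hhm hsum k kp km hk hkp hkm gp gm fp fm hgp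
    hgm hfp hfm
end
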